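/- arXiv:2405.04243 — 2 statements merged into one kernel-verified Lean document; each statement's English description precedes it below -/
import Mathlib

section
/- Symmetry relations for the time-reversal-symmetric cycle (V = U†): let U be a 2×2 unitary matrix, (e₊, e₋) and (f₊, f₋) orthonormal bases of ℂ², and Φ(X) = π₁Xπ₁ + π₂Xπ₂ a rank-one projective measurement channel. Then (i) ζ_c := e₋† U† Φ(f₊f₊†) U e₋ equals θ_c := f₋† Φ(U e₊e₊† U†) f₋, and (ii) ζ := |e₊† U† f₋|² equals δ′ := |f₊† U e₋|². -/
/-!
For an orthonormal basis `(a, b)` of `ℂ²` the completeness relation `a a† + b b† = 1` gives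
`|⟨a, x⟩|² + |⟨b, x⟩|² = ‖x‖²`. The vectors `s = U e₊`, `u = U e₋` again form an orthonormal basis,
and `ζ_c = ∑_{z ∈ {v, w}} |⟨z, f₊⟩|² |⟨z, u⟩|²`. Replacing `f₊` by `f₋` and `u` by `s` turns every
factor `p` into `1 - p`, and both families of replaced factors sum to `1` over `z`; expanding the
products leaves `∑_{z ∈ {v, w}} |⟨z, f₋⟩|² |⟨z, s⟩|² = θ_c`.
Similarly `|⟨s, f₋⟩|² = 1 - |⟨s, f₊⟩|² = |⟨u, f₊⟩|²`.
-/

open Matrix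

theorem sum_vecMulVec_star_self_eq_one {n R : Type*} [Fintype n] [DecidableEq n] [CommRing R]
    [StarRing R] (b : n → n → R) (hb : ∀ i j, star (b i) ⬝ᵥ b j = (1 : Matrix n n R) i j) :
    ∑ i, vecMulVec (b i) (star (b i)) = 1 := by
  set A : Matrix n n R := (of b)ᵀ
  have hA : Aᴴ * A = 1 := by
    ext i j
    rw [← hb]
    simp [A, mul_apply, dotProduct]
  calc ∑ i, vecMulVec (b i) (star (b i)) = A * Aᴴ := by
        ext i j
        simp [A, mul_apply, Matrix.sum_apply, vecMulVec_apply]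
    _ = 1 := mul_eq_one_comm.mp hA

section TransitionProb

variable {m n R : Type*} [Fintype m] [Fintype n] [CommRing R] [StarRing R]

def transitionProb (x y : n → R) : R := (star x ⬝ᵥ y) * (star y ⬝ᵥ x)

theorem transitionProb_comm (x y : n → R) : transitionProb x y = transitionProb y x :=
  mul_comm _ _

theorem transitionProb_eq_norm_sq {𝕜 : Type*} [RCLike 𝕜] (x y : n → 𝕜) :
    transitionProb x y = (‖star x ⬝ᵥ y‖ ^ 2 : ℝ) := by
  rw [transitionProb, star_dotProduct y, RCLike.star_def, RCLike.mul_conj, RCLike.ofReal_pow]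

theorem star_dotProduct_vecMulVec_mulVec (a x : n → R) :
    star x ⬝ᵥ (vecMulVec a (star a) *ᵥ x) = transitionProb a x := by
  rw [vecMulVec_mulVec, op_smul_eq_smul, dotProduct_smul, smul_eq_mul, transitionProb]

theorem star_dotProduct_vecMulVec_sandwich_mulVec (a y x : n → R) :
    star x ⬝ᵥ ((vecMulVec a (star a) * vecMulVec y (star y) * vecMulVec a (star a)) *ᵥ x) =
      transitionProb a y * transitionProb a x := by
  simp only [← mulVec_mulVec, vecMulVec_mulVec, op_smul_eq_smul, mulVec_smul, dotProduct_smul,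
    smul_eq_mul, transitionProb]
  ring

theorem star_dotProduct_conjTranspose_mul_mul_mulVec (A : Matrix m n R) (M : Matrix m m R)
    (x : n → R) : star x ⬝ᵥ ((Aᴴ * M * A) *ᵥ x) = star (A *ᵥ x) ⬝ᵥ (M *ᵥ (A *ᵥ x)) := by
  rw [← mulVec_mulVec, ← mulVec_mulVec, dotProduct_mulVec, star_mulVec]

end TransitionProb

structure IsOrthonormalPair {n R : Type*} [Fintype n] [Semiring R] [StarRing R]
    (a b : n → R) : Prop where
  star_fst_dotProduct : star a ⬝ᵥ a = 1
  star_snd_dotProduct : star b ⬝ᵥ b = 1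
  orthogonal : star a ⬝ᵥ b = 0

namespace IsOrthonormalPair

variable {R : Type*} [CommRing R] [StarRing R]

section

variable {m n : Type*} [Fintype m] [Fintype n] {a b : n → R}

theorem symm (h : IsOrthonormalPair a b) : IsOrthonormalPair b a :=
  ⟨h.2, h.1, by rw [star_dotProduct, h.3, star_zero]⟩

theorem mulVec [DecidableEq n] {U : Matrix m n R} (h : IsOrthonormalPair a b) (hU : Uᴴ * U = 1) :
    IsOrthonormalPair (U *ᵥ a) (U *ᵥ b) := by
  have hdot (x y : n → R) : star (U *ᵥ x) ⬝ᵥ (U *ᵥ y) = star x ⬝ᵥ y := by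
    rw [star_mulVec, ← dotProduct_mulVec, mulVec_mulVec, hU, one_mulVec]
  exact ⟨by rw [hdot, h.1], by rw [hdot, h.2], by rw [hdot, h.3]⟩

end

variable {a b : Fin 2 → R}

theorem vecMulVec_add_vecMulVec (h : IsOrthonormalPair a b) :
    vecMulVec a (star a) + vecMulVec b (star b) = 1 := by
  have hb : ∀ i j, star (![a, b] i) ⬝ᵥ ![a, b] j = (1 : Matrix (Fin 2) (Fin 2) R) i j := by
    intro i j
    fin_cases i <;> fin_cases j
    exacts [h.1, h.3, h.symm.3, h.2]
  simpa [Fin.sum_univ_two] using sum_vecMulVec_star_self_eq_one _ hb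

theorem transitionProb_add_transitionProb (h : IsOrthonormalPair a b) (x : Fin 2 → R) :
    transitionProb a x + transitionProb b x = star x ⬝ᵥ x := by
  rw [← star_dotProduct_vecMulVec_mulVec, ← star_dotProduct_vecMulVec_mulVec, ← dotProduct_add,
    ← add_mulVec, h.vecMulVec_add_vecMulVec, one_mulVec]

theorem transitionProb_fst_snd_eq {x x' y y' : Fin 2 → R} (hx : IsOrthonormalPair x x')
    (hy : IsOrthonormalPair y y') : transitionProb x y' = transitionProb y x' := by
  have hxy : transitionProb x y + transitionProb x y' = 1 := by
    rw [transitionProb_comm x, transitionProb_comm x, hy.transitionProb_add_transitionProb, hx.1]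
  have hyx := hx.transitionProb_add_transitionProb y
  rw [hy.1, transitionProb_comm x' y] at hyx
  linear_combination hxy - hyx

/-- With `(a, b)` the measurement basis, both sides are `x† Φ(y y†) x` and `x'† Φ(y' y'†) x'`. -/
theorem measured_transitionProb_eq {x x' y y' : Fin 2 → R} (hab : IsOrthonormalPair a b)
    (hx : IsOrthonormalPair x x') (hy : IsOrthonormalPair y y') :
    transitionProb a y * transitionProb a x + transitionProb b y * transitionProb b x =
      transitionProb a y' * transitionProb a x' + transitionProb b y' * transitionProb b x' := by
  have hxa : transitionProb a x + transitionProb a x' = 1 := by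
    rw [transitionProb_comm a, transitionProb_comm a, hx.transitionProb_add_transitionProb, hab.1]
  have hxb : transitionProb b x + transitionProb b x' = 1 := by
    rw [transitionProb_comm b, transitionProb_comm b, hx.transitionProb_add_transitionProb, hab.2]
  have hya : transitionProb a y + transitionProb a y' = 1 := by
    rw [transitionProb_comm a, transitionProb_comm a, hy.transitionProb_add_transitionProb, hab.1]
  have hyb : transitionProb b y + transitionProb b y' = 1 := by
    rw [transitionProb_comm b, transitionProb_comm b, hy.transitionProb_add_transitionProb, hab.2]
  have hx' := hab.transitionProb_add_transitionProb x'
  have hy' := hab.transitionProb_add_transitionProb y'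
  rw [hx.2] at hx'
  rw [hy.2] at hy'
  linear_combination transitionProb a x * hya + (1 - transitionProb a y') * hxa +
    transitionProb b x * hyb + (1 - transitionProb b y') * hxb - hx' - hy'

end IsOrthonormalPair

theorem time_reversal_symmetry_relations_general
    (ep em fp fm v w : Fin 2 → ℂ)
    (hep : star ep ⬝ᵥ ep = 1) (hem : star em ⬝ᵥ em = 1) (hepm : star ep ⬝ᵥ em = 0)
    (hfp : star fp ⬝ᵥ fp = 1) (hfm : star fm ⬝ᵥ fm = 1) (hfpm : star fp ⬝ᵥ fm = 0)
    (hv : star v ⬝ᵥ v = 1) (hw : star w ⬝ᵥ w = 1) (hvw : star v ⬝ᵥ w = 0)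
    (U : Matrix (Fin 2) (Fin 2) ℂ)
    (hU : Uᴴ * U = 1)
    (Φ : Matrix (Fin 2) (Fin 2) ℂ → Matrix (Fin 2) (Fin 2) ℂ)
    (hΦ : ∀ X, Φ X = vecMulVec v (star v) * X * vecMulVec v (star v) +
        vecMulVec w (star w) * X * vecMulVec w (star w)) :
    star em ⬝ᵥ ((Uᴴ * Φ (vecMulVec fp (star fp)) * U) *ᵥ em) =
        star fm ⬝ᵥ (Φ (U * vecMulVec ep (star ep) * Uᴴ) *ᵥ fm) ∧
      ‖star ep ⬝ᵥ (Uᴴ *ᵥ fm)‖ ^ 2 = ‖star fp ⬝ᵥ (U *ᵥ em)‖ ^ 2 := by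
  have he : IsOrthonormalPair (U *ᵥ ep) (U *ᵥ em) := IsOrthonormalPair.mulVec ⟨hep, hem, hepm⟩ hU
  have hf : IsOrthonormalPair fp fm := ⟨hfp, hfm, hfpm⟩
  have hπ : IsOrthonormalPair v w := ⟨hv, hw, hvw⟩
  constructor
  · rw [star_dotProduct_conjTranspose_mul_mul_mulVec, mul_vecMulVec, vecMulVec_mul, ← star_mulVec,
      hΦ, hΦ, add_mulVec, add_mulVec, dotProduct_add, dotProduct_add]
    simp only [star_dotProduct_vecMulVec_sandwich_mulVec]
    linear_combination hπ.measured_transitionProb_eq he.symm hf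
  · have h := he.transitionProb_fst_snd_eq hf
    rw [transitionProb_eq_norm_sq, transitionProb_eq_norm_sq] at h
    rw [dotProduct_mulVec, ← star_mulVec]
    exact_mod_cast h

/-- Symmetry relations for the time-reversal-symmetric cycle (`V = Uᴴ`):
let `U` be a `2 × 2` unitary matrix, `(e₊, e₋)` and `(f₊, f₋)` orthonormal bases of `ℂ²`, and
`Φ(X) = π₁ X π₁ + π₂ X π₂` a rank-one projective measurement channel (`π₁ = vvᴴ`,
`π₂ = wwᴴ` for an orthonormal basis `(v, w)`).  Then
(i) `ζ_c := e₋ᴴ Uᴴ Φ(f₊f₊ᴴ) U e₋` equals `θ_c := f₋ᴴ Φ(U e₊e₊ᴴ Uᴴ) f₋`, and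
(ii) `ζ := |e₊ᴴ Uᴴ f₋|²` equals `δ′ := |f₊ᴴ U e₋|²`. -/
theorem time_reversal_symmetry_relations
    (ep em fp fm v w : Fin 2 → ℂ)
    (hep : star ep ⬝ᵥ ep = 1) (hem : star em ⬝ᵥ em = 1) (hepm : star ep ⬝ᵥ em = 0)
    (hfp : star fp ⬝ᵥ fp = 1) (hfm : star fm ⬝ᵥ fm = 1) (hfpm : star fp ⬝ᵥ fm = 0)
    (hv : star v ⬝ᵥ v = 1) (hw : star w ⬝ᵥ w = 1) (hvw : star v ⬝ᵥ w = 0)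
    (U : Matrix (Fin 2) (Fin 2) ℂ)
    (hU : Uᴴ * U = 1) (hU' : U * Uᴴ = 1)
    (Φ : Matrix (Fin 2) (Fin 2) ℂ → Matrix (Fin 2) (Fin 2) ℂ)
    (hΦ : ∀ X, Φ X = vecMulVec v (star v) * X * vecMulVec v (star v) +
        vecMulVec w (star w) * X * vecMulVec w (star w)) :
    star em ⬝ᵥ ((Uᴴ * Φ (vecMulVec fp (star fp)) * U) *ᵥ em) =
        star fm ⬝ᵥ (Φ (U * vecMulVec ep (star ep) * Uᴴ) *ᵥ fm) ∧
      ‖star ep ⬝ᵥ (Uᴴ *ᵥ fm)‖ ^ 2 = ‖star fp ⬝ᵥ (U *ᵥ em)‖ ^ 2 :=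
  time_reversal_symmetry_relations_general ep em fp fm v w hep hem hepm hfp hfm hfpm hv hw hvw U hU
    Φ hΦ
end

section
/- Lower bound on the relative fluctuations of the undephased heat released: for β > 0, ν₁ > 0 and ζᶜ ∈ (0, 1], with ⟨Q_C⟩ = −2ζᶜν₁ tanh(βν₁), ⟨Q_C²⟩_c = 4ζᶜν₁² − ⟨Q_C⟩², and average entropy production ⟨Σ⟩ = −β⟨Q_C⟩, one has the identity ⟨Σ⟩(⟨Q_C²⟩_c/⟨Q_C⟩² + 1) = 2βν₁ coth(βν₁), which is at least 2; consequently ⟨Q_C²⟩_c/⟨Q_C⟩² ≥ 2βν₁ coth(βν₁)/⟨Σ⟩ − 1 ≥ 2/⟨Σ⟩ − 1. -/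
/-! The identity is pure algebra: `⟨Q_C²⟩_c/⟨Q_C⟩² + 1 = 4ζᶜν₁²/⟨Q_C⟩²`, and multiplying by
`⟨Σ⟩ = −β⟨Q_C⟩` cancels one factor `⟨Q_C⟩` together with `ζᶜ`, leaving `2βν₁ coth(βν₁)`.
The bound `x coth x ≥ 1` for `x > 0` is `sinh x ≤ x cosh x`, which holds because
`x cosh x − sinh x` vanishes at `0` and has derivative `x sinh x ≥ 0`. -/

open Real Set

theorem Real.sinh_le_mul_cosh {x : ℝ} (hx : 0 ≤ x) : sinh x ≤ x * cosh x := by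
  let f : ℝ → ℝ := fun t ↦ t * cosh t - sinh t
  have hf : ∀ t, HasDerivAt f (t * sinh t) t := fun t ↦ by
    simpa using ((hasDerivAt_id' t).fun_mul (hasDerivAt_cosh t)).fun_sub (hasDerivAt_sinh t)
  have hmono : MonotoneOn f (Ici 0) :=
    monotoneOn_of_hasDerivWithinAt_nonneg (convex_Ici 0)
      (fun t _ ↦ (hf t).continuousAt.continuousWithinAt) (fun t _ ↦ (hf t).hasDerivWithinAt)
      fun t ht ↦ by
        rw [interior_Ici] at ht
        exact mul_nonneg ht.le (sinh_nonneg_iff.2 ht.le)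
  simpa [f] using hmono self_mem_Ici hx hx

theorem Real.one_le_mul_cosh_div_sinh {x : ℝ} (hx : 0 < x) : 1 ≤ x * (cosh x / sinh x) := by
  rw [← mul_div_assoc, one_le_div (sinh_pos_iff.2 hx)]
  exact sinh_le_mul_cosh hx.le

theorem undephased_QC_relative_fluctuations_lower_bound_general
    (β ν₁ ζC : ℝ) (hβ : 0 < β) (hν₁ : 0 < ν₁) (hζC0 : 0 < ζC)
    (QC QC2 Sav : ℝ)
    (hQC : QC = -2 * ζC * ν₁ * Real.tanh (β * ν₁))
    (hQC2 : QC2 = 4 * ζC * ν₁ ^ 2 - QC ^ 2)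
    (hSav : Sav = -β * QC) :
    Sav * (QC2 / QC ^ 2 + 1) = 2 * β * ν₁ * (Real.cosh (β * ν₁) / Real.sinh (β * ν₁)) ∧
      2 ≤ 2 * β * ν₁ * (Real.cosh (β * ν₁) / Real.sinh (β * ν₁)) ∧
      2 * β * ν₁ * (Real.cosh (β * ν₁) / Real.sinh (β * ν₁)) / Sav - 1 ≤ QC2 / QC ^ 2 ∧
      2 / Sav - 1 ≤ 2 * β * ν₁ * (Real.cosh (β * ν₁) / Real.sinh (β * ν₁)) / Sav - 1 := by
  have hx : 0 < β * ν₁ := mul_pos hβ hν₁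
  have hsinh : 0 < sinh (β * ν₁) := sinh_pos_iff.2 hx
  have hQC_neg : QC < 0 := by
    rw [hQC, tanh_eq_sinh_div_cosh, neg_mul, neg_mul, neg_mul, neg_lt_zero]
    positivity
  have hSav_pos : 0 < Sav := by
    rw [hSav, neg_mul, neg_pos]
    exact mul_neg_of_pos_of_neg hβ hQC_neg
  have hident : Sav * (QC2 / QC ^ 2 + 1) =
      2 * β * ν₁ * (cosh (β * ν₁) / sinh (β * ν₁)) := by
    rw [hQC2, hSav, hQC, tanh_eq_sinh_div_cosh]
    field_simp
    ring
  have hge2 : 2 ≤ 2 * β * ν₁ * (cosh (β * ν₁) / sinh (β * ν₁)) := by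
    linarith [one_le_mul_cosh_div_sinh hx]
  refine ⟨hident, hge2, ?_, by gcongr⟩
  rw [← hident, mul_div_cancel_left₀ _ hSav_pos.ne', add_sub_cancel_right]

/-- Lower bound on the relative fluctuations of the undephased heat
released: for `β > 0`, `ν₁ > 0` and `ζᶜ ∈ (0, 1]`, with `⟨Q_C⟩ = −2ζᶜν₁ tanh(βν₁)`,
`⟨Q_C²⟩_c = 4ζᶜν₁² − ⟨Q_C⟩²` and average entropy production `⟨Σ⟩ = −β⟨Q_C⟩`, one has the
identity `⟨Σ⟩(⟨Q_C²⟩_c/⟨Q_C⟩² + 1) = 2βν₁ coth(βν₁)`, which is at least `2`; consequently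
`⟨Q_C²⟩_c/⟨Q_C⟩² ≥ 2βν₁ coth(βν₁)/⟨Σ⟩ − 1 ≥ 2/⟨Σ⟩ − 1`. -/
theorem undephased_QC_relative_fluctuations_lower_bound
    (β ν₁ ζC : ℝ) (hβ : 0 < β) (hν₁ : 0 < ν₁) (hζC0 : 0 < ζC) (hζC1 : ζC ≤ 1)
    (QC QC2 Sav : ℝ)
    (hQC : QC = -2 * ζC * ν₁ * Real.tanh (β * ν₁))
    (hQC2 : QC2 = 4 * ζC * ν₁ ^ 2 - QC ^ 2)
    (hSav : Sav = -β * QC) :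
    Sav * (QC2 / QC ^ 2 + 1) = 2 * β * ν₁ * (Real.cosh (β * ν₁) / Real.sinh (β * ν₁)) ∧
      2 ≤ 2 * β * ν₁ * (Real.cosh (β * ν₁) / Real.sinh (β * ν₁)) ∧
      2 * β * ν₁ * (Real.cosh (β * ν₁) / Real.sinh (β * ν₁)) / Sav - 1 ≤ QC2 / QC ^ 2 ∧
      2 / Sav - 1 ≤ 2 * β * ν₁ * (Real.cosh (β * ν₁) / Real.sinh (β * ν₁)) / Sav - 1 :=
  undephased_QC_relative_fluctuations_lower_bound_general β ν₁ ζC hβ hν₁ hζC0 QC QC2 Sav hQC hQC2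
    hSav
end
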